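/- arXiv:2005.14337 — 2 statements merged into one kernel-verified Lean document; each statement's English description precedes it below -/
import Mathlib

section
/- Let Σ₁ and Σ₂ be vertex-disjoint signed graphs with chromatic numbers χ₁ and χ₂ and maximum deficiencies M₁ and M₂, respectively, with M₁ ≥ M₂. If χ₁ ≥ χ₁ + χ₂ − M₁ − M₂ (equivalently, M₁ + M₂ ≥ χ₂), then χ(Σ₁ ∨₊ Σ₂) = χ₁. -/
/-- A signed simple graph: a symmetric, loopless adjacency relation together with a
symmetric signature taking values `1` (positive) or `-1` (negative). -/
structure SignedGraph (V : Type) where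
  Adj : V → V → Prop
  sign : V → V → ℤ
  symm : ∀ u v, Adj u v → Adj v u
  loopless : ∀ v, ¬ Adj v v
  sign_symm : ∀ u v, sign u v = sign v u
  sign_unit : ∀ u v, sign u v = 1 ∨ sign u v = -1

/-- The color set of size `n`: for `n = 2k` it is `{±1, …, ±k}`, and for
`n = 2k+1` it is `{±1, …, ±k, 0}`. -/
noncomputable def colorSet (n : ℕ) : Finset ℤ :=
  (Finset.Icc (-((n / 2 : ℕ) : ℤ)) ((n / 2 : ℕ) : ℤ)).filter (fun i => i ≠ 0 ∨ n % 2 = 1)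

/-- A proper coloration of a signed graph with the color set of size `n`:
the colors lie in `colorSet n` and for every edge `uv`, `κ u ≠ σ(uv) · κ v`. -/
def ProperColoring {V : Type} (G : SignedGraph V) (n : ℕ) (κ : V → ℤ) : Prop :=
  (∀ v, κ v ∈ colorSet n) ∧ ∀ u v, G.Adj u v → κ u ≠ G.sign u v * κ v

/-- The chromatic number: the least `n` such that there is a proper coloration
with the color set of size `n`. -/
noncomputable def chromNum {V : Type} (G : SignedGraph V) : ℕ :=
  sInf {n | ∃ κ : V → ℤ, ProperColoring G n κ}

/-- The deficiency set of a (minimal) coloration: the colors of the color set of size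
`χ(G)` not taken by `κ`. -/
noncomputable def defSet {V : Type} [Fintype V] (G : SignedGraph V) (κ : V → ℤ) : Finset ℤ :=
  (colorSet (chromNum G)).filter (fun c => ∀ v, κ v ≠ c)

/-- The deficiency of a (minimal) coloration: the number of unused colors. -/
noncomputable def deficiency {V : Type} [Fintype V] (G : SignedGraph V) (κ : V → ℤ) : ℕ :=
  (defSet G κ).card

/-- The maximum deficiency: the maximum of `deficiency G κ` over all minimal
proper colorations `κ` of `G`. -/
noncomputable def maxDef {V : Type} [Fintype V] (G : SignedGraph V) : ℕ :=
  sSup {d | ∃ κ : V → ℤ, ProperColoring G (chromNum G) κ ∧ deficiency G κ = d}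

/-- A signed graph (with even chromatic number `2k`) is exceptional if in every proper
coloration with color set `{±1, …, ±k}` using exactly `χ(G) - M(G)` distinct colors,
every used color appears on both endpoints of some negative edge. -/
def Exceptional {V : Type} [Fintype V] (G : SignedGraph V) : Prop :=
  ∀ κ : V → ℤ, ProperColoring G (chromNum G) κ →
    (Finset.univ.image κ).card = chromNum G - maxDef G →
    ∀ c ∈ Finset.univ.image κ,
      ∃ u v, G.Adj u v ∧ G.sign u v = -1 ∧ κ u = c ∧ κ v = c

/-- The all-positive join of two (vertex-disjoint) signed graphs: keep the edges and
signs of both graphs and join every vertex of the first to every vertex of the second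
by a positive edge. -/
def posJoin {V₁ V₂ : Type} (G₁ : SignedGraph V₁) (G₂ : SignedGraph V₂) :
    SignedGraph (V₁ ⊕ V₂) where
  Adj x y :=
    match x, y with
    | Sum.inl a, Sum.inl b => G₁.Adj a b
    | Sum.inr a, Sum.inr b => G₂.Adj a b
    | _, _ => True
  sign x y :=
    match x, y with
    | Sum.inl a, Sum.inl b => G₁.sign a b
    | Sum.inr a, Sum.inr b => G₂.sign a b
    | _, _ => 1
  symm := by
    rintro (a | a) (b | b) h
    · exact G₁.symm a b h
    · trivial
    · trivial
    · exact G₂.symm a b h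
  loopless := by
    rintro (a | a) h
    · exact G₁.loopless a h
    · exact G₂.loopless a h
  sign_symm := by
    rintro (a | a) (b | b)
    · exact G₁.sign_symm a b
    · rfl
    · rfl
    · exact G₂.sign_symm a b
  sign_unit := by
    rintro (a | a) (b | b)
    · exact G₁.sign_unit a b
    · exact Or.inl rfl
    · exact Or.inl rfl
    · exact G₂.sign_unit a b
-- Auxiliary lemmas

lemma mem_colorSet {n : ℕ} {c : ℤ} :
    c ∈ colorSet n ↔ (-(((n / 2 : ℕ) : ℤ)) ≤ c ∧ c ≤ ((n / 2 : ℕ) : ℤ)) ∧ (c ≠ 0 ∨ n % 2 = 1) := by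
  simp [colorSet, Finset.mem_filter, Finset.mem_Icc]

lemma card_colorSet (n : ℕ) : (colorSet n).card = n := by
  by_cases hpar : n % 2 = 1
  · have : colorSet n = Finset.Icc (-((n / 2 : ℕ) : ℤ)) ((n / 2 : ℕ) : ℤ) := by
      ext c; simp [colorSet, hpar]
    rw [this, Int.card_Icc]
    omega
  · have : colorSet n = (Finset.Icc (-((n / 2 : ℕ) : ℤ)) ((n / 2 : ℕ) : ℤ)).erase 0 := by
      ext c; simp [colorSet, hpar, and_comm]
    rw [this, Finset.card_erase_of_mem (by simp; omega), Int.card_Icc]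
    omega

lemma exists_proper {V : Type} [Fintype V] (G : SignedGraph V) :
    ∃ n, ∃ κ : V → ℤ, ProperColoring G n κ := by
  classical
  refine ⟨2 * Fintype.card V, fun v => ((Fintype.equivFin V v : ℕ) : ℤ) + 1, fun v => ?_, ?_⟩
  · rw [mem_colorSet]
    have hv : (Fintype.equivFin V v : ℕ) < Fintype.card V := (Fintype.equivFin V v).isLt
    refine ⟨⟨?_, ?_⟩, Or.inl ?_⟩ <;> push_cast <;> omega
  · intro u v huv
    have hne : u ≠ v := fun h => G.loopless v (h ▸ huv)
    have hinj : (Fintype.equivFin V u : ℕ) ≠ (Fintype.equivFin V v : ℕ) := by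
      intro hh; exact hne ((Fintype.equivFin V).injective (Fin.ext hh))
    rcases G.sign_unit u v with hs | hs <;> rw [hs] <;> push_cast <;> omega

lemma exists_proper_chrom {V : Type} [Fintype V] (G : SignedGraph V) :
    ∃ κ : V → ℤ, ProperColoring G (chromNum G) κ := by
  have : {n | ∃ κ : V → ℤ, ProperColoring G n κ}.Nonempty := exists_proper G
  exact Nat.sInf_mem this

lemma exists_maxDef {V : Type} [Fintype V] (G : SignedGraph V) :
    ∃ κ : V → ℤ, ProperColoring G (chromNum G) κ ∧ deficiency G κ = maxDef G := by
  have hne : {d | ∃ κ : V → ℤ, ProperColoring G (chromNum G) κ ∧ deficiency G κ = d}.Nonempty := by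
    obtain ⟨κ, hκ⟩ := exists_proper_chrom G
    exact ⟨deficiency G κ, κ, hκ, rfl⟩
  have hbdd : BddAbove {d | ∃ κ : V → ℤ, ProperColoring G (chromNum G) κ ∧ deficiency G κ = d} := by
    refine ⟨(colorSet (chromNum G)).card, ?_⟩
    rintro d ⟨κ, hκ, rfl⟩
    exact Finset.card_filter_le _ _
  obtain ⟨κ, hκ, hd⟩ := Nat.sSup_mem hne hbdd
  exact ⟨κ, hκ, hd⟩

private def swapPair (c m x : ℤ) : ℤ :=
  if x = c then m else if x = -c then -m else if x = m then c else if x = -m then -c else x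

private lemma swapPair_neg {c m : ℤ} (hc : c ≠ 0) (hm : m ≠ 0) (x : ℤ) :
    swapPair c m (-x) = -swapPair c m x := by
  unfold swapPair; split_ifs <;> omega

private lemma swapPair_inj {c m : ℤ} (hc : c ≠ 0) (hm : m ≠ 0) {x y : ℤ}
    (hxy : swapPair c m x = swapPair c m y) : x = y := by
  unfold swapPair at hxy; split_ifs at hxy <;> omega

lemma defSet_antifree {V : Type} [Fintype V] (G : SignedGraph V) (κ : V → ℤ)
    (hκ : ProperColoring G (chromNum G) κ) :
    ∀ c ∈ defSet G κ, ∀ c' ∈ defSet G κ, c ≠ -c' := by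
  intro c hc c' hc' hcc
  rw [defSet, Finset.mem_filter] at hc hc'
  obtain ⟨hcmem, hcun⟩ := hc
  obtain ⟨hcmem', hcun'⟩ := hc'
  rw [mem_colorSet] at hcmem hcmem'
  by_cases hc0 : c = 0
  · -- 0 unused while chromNum is odd: contradiction with minimality
    have hodd : chromNum G % 2 = 1 := by
      rcases hcmem.2 with h1 | h1
      · exact absurd hc0 h1
      · exact h1
    have hprop : ProperColoring G (chromNum G - 1) κ := by
      refine ⟨fun v => ?_, hκ.2⟩
      have hv := hκ.1 v
      rw [mem_colorSet] at hv ⊢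
      have hne : κ v ≠ 0 := by rw [← hc0]; exact hcun v
      obtain ⟨⟨h1, h2⟩, _⟩ := hv
      refine ⟨⟨?_, ?_⟩, Or.inl hne⟩ <;> omega
    have hle : chromNum G ≤ chromNum G - 1 := Nat.sInf_le ⟨κ, hprop⟩
    omega
  · -- a full antipodal pair unused: contradiction with minimality
    have hc'v : c' = -c := by omega
    have hm1 : (1 : ℤ) ≤ ((chromNum G / 2 : ℕ) : ℤ) := by
      obtain ⟨⟨h1, h2⟩, _⟩ := hcmem
      omega
    have hm0 : ((chromNum G / 2 : ℕ) : ℤ) ≠ 0 := by omega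
    have hn2 : 2 ≤ chromNum G := by omega
    have hprop : ProperColoring G (chromNum G - 2)
        (fun v => swapPair c ((chromNum G / 2 : ℕ) : ℤ) (κ v)) := by
      constructor
      · intro v
        have hv := hκ.1 v
        rw [mem_colorSet] at hv ⊢
        have hvc : κ v ≠ c := hcun v
        have hvc' : κ v ≠ -c := by
          have := hcun' v; omega
        obtain ⟨⟨h1, h2⟩, h3⟩ := hv
        obtain ⟨⟨g1, g2⟩, _⟩ := hcmem
        beta_reduce
        unfold swapPair
        split_ifs <;> omega
      · intro u v huv
        have h2 := hκ.2 u v huv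
        rcases G.sign_unit u v with hs | hs <;> rw [hs] at h2 ⊢
        · rw [one_mul] at h2 ⊢
          intro heq
          exact h2 (swapPair_inj hc0 hm0 heq)
        · intro heq
          rw [neg_one_mul] at heq h2
          rw [← swapPair_neg hc0 hm0] at heq
          exact h2 (swapPair_inj hc0 hm0 heq)
    have hle : chromNum G ≤ chromNum G - 2 := Nat.sInf_le ⟨_, hprop⟩
    omega

/-- Lemma 4.1: if `M₁ ≥ M₂` and `χ₁ ≥ χ₁ + χ₂ − M₁ − M₂`, then
`χ(S₁ ∨₊ S₂) = χ₁`. -/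
theorem join_chromatic_eq_left {V₁ V₂ : Type} [Fintype V₁] [Fintype V₂]
    (S₁ : SignedGraph V₁) (S₂ : SignedGraph V₂)
    (hM : maxDef S₂ ≤ maxDef S₁)
    (h : (chromNum S₁ : ℤ) + (chromNum S₂ : ℤ) - (maxDef S₁ : ℤ) - (maxDef S₂ : ℤ) ≤
      (chromNum S₁ : ℤ)) :
    chromNum (posJoin S₁ S₂) = chromNum S₁ := by
  classical
  obtain ⟨κ₁, hκ₁, hd₁⟩ := exists_maxDef S₁
  obtain ⟨κ₂, hκ₂, hd₂⟩ := exists_maxDef S₂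
  set U := defSet S₁ κ₁ with hU
  set T := Finset.univ.image κ₂ with hT
  have hTmem : ∀ v : V₂, κ₂ v ∈ T := fun v => Finset.mem_image_of_mem κ₂ (Finset.mem_univ v)
  -- |T| + M₂ = χ₂
  have hsplit : deficiency S₂ κ₂ + T.card = chromNum S₂ := by
    have hfe : (colorSet (chromNum S₂)).filter (fun c => ¬ ∀ v, κ₂ v ≠ c) = T := by
      ext c
      simp only [Finset.mem_filter, not_forall, not_not, hT, Finset.mem_image]
      constructor
      · rintro ⟨_, v, hv⟩; exact ⟨v, Finset.mem_univ v, hv⟩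
      · rintro ⟨v, _, hv⟩; exact ⟨hv ▸ hκ₂.1 v, v, hv⟩
    have := Finset.card_filter_add_card_filter_not
      (s := colorSet (chromNum S₂)) (p := fun c => ∀ v, κ₂ v ≠ c)
    rw [hfe] at this
    rw [← card_colorSet (chromNum S₂), ← this]
    rfl
  -- |T| ≤ |U|
  have hcard : T.card ≤ U.card := by
    have h1 : U.card = maxDef S₁ := hd₁
    have h2 : deficiency S₂ κ₂ = maxDef S₂ := hd₂
    omega
  have hcard' : Fintype.card {x // x ∈ T} ≤ Fintype.card {x // x ∈ U} := by
    simpa using hcard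
  obtain ⟨g⟩ : Nonempty ({x // x ∈ T} ↪ {x // x ∈ U}) :=
    Function.Embedding.nonempty_of_card_le hcard'
  have hUspec : ∀ a : {x // x ∈ U}, (a : ℤ) ∈ colorSet (chromNum S₁) ∧ ∀ w, κ₁ w ≠ (a : ℤ) :=
    fun a => Finset.mem_filter.mp a.2
  -- the join coloring
  have hjoin : ProperColoring (posJoin S₁ S₂) (chromNum S₁)
      (fun x => match x with
        | Sum.inl v => κ₁ v
        | Sum.inr v => (g ⟨κ₂ v, hTmem v⟩ : ℤ)) := by
    constructor
    · rintro (v | v)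
      · exact hκ₁.1 v
      · exact (hUspec (g ⟨κ₂ v, hTmem v⟩)).1
    · rintro (a | a) (b | b) hab
      · exact hκ₁.2 a b hab
      · have hs1 : (posJoin S₁ S₂).sign (Sum.inl a) (Sum.inr b) = 1 := rfl
        rw [hs1, one_mul]
        exact (hUspec (g ⟨κ₂ b, hTmem b⟩)).2 a
      · have hs1 : (posJoin S₁ S₂).sign (Sum.inr a) (Sum.inl b) = 1 := rfl
        rw [hs1, one_mul]
        exact Ne.symm ((hUspec (g ⟨κ₂ a, hTmem a⟩)).2 b)
      · have h2 := hκ₂.2 a b hab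
        have hsigneq : (posJoin S₁ S₂).sign (Sum.inr a) (Sum.inr b) = S₂.sign a b := rfl
        rw [hsigneq]
        rcases S₂.sign_unit a b with hs | hs <;> rw [hs] at h2 ⊢
        · rw [one_mul] at h2 ⊢
          intro heq
          have hab' : (⟨κ₂ a, hTmem a⟩ : {x // x ∈ T}) = ⟨κ₂ b, hTmem b⟩ :=
            g.injective (Subtype.ext heq)
          exact h2 (congrArg Subtype.val hab')
        · intro heq
          rw [neg_one_mul] at heq
          exact defSet_antifree S₁ κ₁ hκ₁ _ (g ⟨κ₂ a, hTmem a⟩).2 _ (g ⟨κ₂ b, hTmem b⟩).2 heq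
  have hub : chromNum (posJoin S₁ S₂) ≤ chromNum S₁ := Nat.sInf_le ⟨_, hjoin⟩
  have hlb : chromNum S₁ ≤ chromNum (posJoin S₁ S₂) := by
    obtain ⟨κ, hκ⟩ := exists_proper_chrom (posJoin S₁ S₂)
    refine Nat.sInf_le ⟨fun v => κ (Sum.inl v), fun v => hκ.1 (Sum.inl v), ?_⟩
    intro u v huv
    exact hκ.2 (Sum.inl u) (Sum.inl v) huv
  omega
end

section
/- Let Σ be a signed graph with even chromatic number and non-zero maximum deficiency M. Then in every minimal coloration κ of Σ with def(κ) = M, for every color i in the deficiency set D(κ), the color −i appears on both endpoints of some negative edge of Σ. -/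
/-- Proposition 3.2: if `χ(S)` is even and `M(S) ≠ 0`, then in every
minimal coloration `κ` with `def(κ) = M(S)`, for every color `i ∈ D(κ)` the color `−i`
appears on both endpoints of some negative edge. -/
theorem deficiency_set_negative_edge {V : Type} [Fintype V] (S : SignedGraph V)
    (heven : Even (chromNum S)) (hM : maxDef S ≠ 0)
    (κ : V → ℤ) (hκ : ProperColoring S (chromNum S) κ)
    (hdef : deficiency S κ = maxDef S) :
    ∀ i ∈ defSet S κ,
      ∃ u v, S.Adj u v ∧ S.sign u v = -1 ∧ κ u = -i ∧ κ v = -i := by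
  intro i hi
  by_contra hcon
  push_neg at hcon
  obtain ⟨hprop1, hprop2⟩ := hκ
  set χ := chromNum S with hχ
  rw [defSet, Finset.mem_filter] at hi
  obtain ⟨hiC, hiunused⟩ := hi
  have hmod : χ % 2 = 0 := Nat.even_iff.mp heven
  rw [colorSet, Finset.mem_filter, Finset.mem_Icc] at hiC
  obtain ⟨⟨hi1, hi2⟩, hi3⟩ := hiC
  have hi0 : i ≠ 0 := by
    rcases hi3 with h | h
    · exact h
    · omega
  set k : ℕ := χ / 2 with hk
  set K : ℤ := (k : ℤ) with hK
  have hK1 : (1 : ℤ) ≤ K := by omega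
  have hk1 : 1 ≤ k := by omega
  have hχk : χ = 2 * k := by omega
  -- facts about colors of κ
  have hmem : ∀ v, -K ≤ κ v ∧ κ v ≤ K ∧ κ v ≠ 0 := by
    intro v
    have h := hprop1 v
    rw [colorSet, Finset.mem_filter, Finset.mem_Icc] at h
    obtain ⟨⟨h1, h2⟩, h3⟩ := h
    refine ⟨h1, h2, ?_⟩
    rcases h3 with h | h
    · exact h
    · omega
  -- the (−i)-class is independent
  have hind : ∀ u v, S.Adj u v → κ u = -i → κ v ≠ -i := by
    intro u v hadj hu hv
    rcases S.sign_unit u v with hs | hs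
    · exact hprop2 u v hadj (by rw [hs, hu, hv]; ring)
    · exact hcon u v hadj hs hu hv
  -- recolor the (−i)-class with i
  set κ₁ : V → ℤ := fun v => if κ v = -i then i else κ v with hκ₁
  have hκ₁cases : ∀ v, (κ₁ v = i ∧ κ v = -i) ∨ (κ₁ v = κ v ∧ κ v ≠ -i) := by
    intro v
    simp only [hκ₁]
    split_ifs with h
    · exact Or.inl ⟨rfl, h⟩
    · exact Or.inr ⟨rfl, h⟩
  have hκ₁prop : ∀ u v, S.Adj u v → κ₁ u ≠ S.sign u v * κ₁ v := by
    intro u v hadj heq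
    rcases hκ₁cases u with ⟨hu1, hu2⟩ | ⟨hu1, hu2⟩ <;>
      rcases hκ₁cases v with ⟨hv1, hv2⟩ | ⟨hv1, hv2⟩
    · exact hind u v hadj hu2 hv2
    · rw [hu1, hv1] at heq
      have h3 := hiunused v
      rcases S.sign_unit u v with hs | hs <;> rw [hs] at heq <;> omega
    · rw [hu1, hv1] at heq
      have h3 := hiunused u
      rcases S.sign_unit u v with hs | hs <;> rw [hs] at heq <;> omega
    · rw [hu1, hv1] at heq
      exact hprop2 u v hadj heq
  have hκ₁mem : ∀ v, -K ≤ κ₁ v ∧ κ₁ v ≤ K ∧ κ₁ v ≠ 0 ∧ κ₁ v ≠ -i := by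
    intro v
    have h1 := hmem v
    rcases hκ₁cases v with ⟨hv1, hv2⟩ | ⟨hv1, hv2⟩ <;> rw [hv1] <;> omega
  -- relabel:  i ↦ 0,  ±K ↦ ±i
  set f : ℤ → ℤ := fun x => if x = i then 0 else if x = K then i else if x = -K then -i else x
    with hf
  have hfbd : ∀ a : ℤ, -K ≤ a → a ≤ K → a ≠ 0 → a ≠ -i → -(K - 1) ≤ f a ∧ f a ≤ K - 1 := by
    intro a h1 h2 h3 h4
    simp only [hf]
    split_ifs <;> omega
  have hfkey : ∀ a b : ℤ, -K ≤ a → a ≤ K → a ≠ 0 → a ≠ -i →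
      -K ≤ b → b ≤ K → b ≠ 0 → b ≠ -i → ∀ s : ℤ, s = 1 ∨ s = -1 →
      f a = s * f b → a = s * b ∨ (a = i ∧ b = i) := by
    intro a b ha1 ha2 ha3 ha4 hb1 hb2 hb3 hb4 s hs heq
    simp only [hf] at heq
    rcases hs with rfl | rfl <;> split_ifs at heq <;> omega
  set κ₂ : V → ℤ := fun v => f (κ₁ v) with hκ₂
  -- κ₂ is a proper coloring with χ − 1 colors
  have hhalf : (χ - 1) / 2 = k - 1 := by omega
  have hmem2 : ∀ v, κ₂ v ∈ colorSet (χ - 1) := by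
    intro v
    rw [colorSet, Finset.mem_filter, Finset.mem_Icc, hhalf]
    obtain ⟨h1, h2, h3, h4⟩ := hκ₁mem v
    have hb := hfbd (κ₁ v) h1 h2 h3 h4
    refine ⟨⟨?_, ?_⟩, Or.inr ?_⟩
    · simp only [hκ₂]; omega
    · simp only [hκ₂]; omega
    · omega
  have hprop2' : ∀ u v, S.Adj u v → κ₂ u ≠ S.sign u v * κ₂ v := by
    intro u v hadj heq
    obtain ⟨hu1, hu2, hu3, hu4⟩ := hκ₁mem u
    obtain ⟨hv1, hv2, hv3, hv4⟩ := hκ₁mem v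
    have h := hfkey (κ₁ u) (κ₁ v) hu1 hu2 hu3 hu4 hv1 hv2 hv3 hv4
      (S.sign u v) (S.sign_unit u v) heq
    rcases h with h | ⟨hu, hv⟩
    · exact hκ₁prop u v hadj h
    · have hu' : κ u = -i := by
        rcases hκ₁cases u with ⟨h1, h2⟩ | ⟨h1, h2⟩
        · exact h2
        · rw [h1] at hu; exact absurd hu (hiunused u)
      have hv' : κ v = -i := by
        rcases hκ₁cases v with ⟨h1, h2⟩ | ⟨h1, h2⟩
        · exact h2
        · rw [h1] at hv; exact absurd hv (hiunused v)
      exact hind u v hadj hu' hv'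
  have hle : chromNum S ≤ χ - 1 := Nat.sInf_le ⟨κ₂, hmem2, hprop2'⟩
  omega
end
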